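/- Let n ≥ 1 and let x, y, z, w, s, t ∈ (ℤ/2)ⁿ. Then the system of equations [x_p + y_p + z_p + w_p + s_p + t_p = 0 for every p ∈ {1,…,n}] and [x_p x_q + y_p y_q + z_p z_q + w_p w_q + s_p s_q + t_p t_q = 0 for every p < q in {1,…,n}] (all equations in ℤ/2) holds if and only if there exists a partition of the index set {1,2,3,4,5,6} into three pairs {(i₁,j₁),(i₂,j₂),(i₃,j₃)} such that v_{i_k} = v_{j_k} for k = 1,2,3, where (v₁,…,v₆) = (x,y,z,w,s,t). -/
import Mathlib

set_option maxHeartbeats 1000000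

def Paired {α : Type*} (v : Fin 6 → α) : Prop :=
  ∃ σ : Equiv.Perm (Fin 6), (∀ k, σ k ≠ k) ∧ (∀ k, σ (σ k) = k) ∧ (∀ k, v (σ k) = v k)

private lemma zmod2_add_self : ∀ a : ZMod 2, a + a = 0 := by decide
private lemma zmod2_mul_self : ∀ a : ZMod 2, a * a = a := by decide
private lemma zmod2_ne_zero' : ∀ a : ZMod 2, a ≠ 0 → a = 1 := by decide
private lemma zmod2_add_eq_zero {a b : ZMod 2} (h : a + b = 0) : a = b := by
  revert h; revert a b; decide
private lemma zmod2_if_mul (a b : ZMod 2) : (if a = 1 then b else 0) = a * b := by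
  revert a b; decide

private lemma natCast_zmod2_even {k : ℕ} (h : Even k) : (k : ZMod 2) = 0 := by
  rw [ZMod.natCast_eq_zero_iff]
  exact even_iff_two_dvd.mp h

private lemma even_of_natCast_zmod2 {k : ℕ} (h : (k : ZMod 2) = 0) : Even k := by
  rw [ZMod.natCast_eq_zero_iff] at h
  exact even_iff_two_dvd.mpr h

private lemma zmod2_ne_one' : ∀ a : ZMod 2, a ≠ 1 → a = 0 := by decide
private lemma zmod2_add_eq_zero' : ∀ a b : ZMod 2, a + b = 0 → a = b := by decide

private lemma castval : ∀ k : ℕ, ((k : ZMod 2)) = if Even k then 0 else 1 := by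
  intro k
  rcases Nat.even_or_odd k with h | h
  · rw [if_pos h, natCast_zmod2_even h]
  · have hne : ¬ Even k := by rw [Nat.even_iff]; rw [Nat.odd_iff] at h; omega
    rw [if_neg hne]
    obtain ⟨m, rfl⟩ := h
    push_cast
    rw [show ((2 : ZMod 2)) = 0 by decide]
    ring

/-- Matching construction: if all fibers of `v` restricted to `S` are even, there is a
fixed-point-free involution of `S` preserving `v`. -/
private lemma exists_matching {α : Type*} [DecidableEq α] :
    ∀ (m : ℕ) (S : Finset (Fin 6)), S.card ≤ m →
    ∀ (v : Fin 6 → α), (∀ j ∈ S, Even ((S.filter (fun i => v i = v j)).card)) →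
    ∃ f : Fin 6 → Fin 6, (∀ i, i ∉ S → f i = i) ∧
      ∀ i ∈ S, f i ∈ S ∧ f i ≠ i ∧ f (f i) = i ∧ v (f i) = v i := by
  intro m
  induction m with
  | zero =>
    intro S hS v _
    have : S = ∅ := Finset.card_eq_zero.mp (Nat.le_zero.mp hS)
    subst this
    exact ⟨id, fun i _ => rfl, fun i hi => absurd hi (Finset.notMem_empty i)⟩
  | succ m ih =>
    intro S hS v hv
    rcases S.eq_empty_or_nonempty with rfl | ⟨a, ha⟩
    · exact ⟨id, fun i _ => rfl, fun i hi => absurd hi (Finset.notMem_empty i)⟩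
    · have hFa : a ∈ S.filter (fun i => v i = v a) := by
        simp [Finset.mem_filter, ha]
      have hev := hv a ha
      have hpos : 0 < (S.filter (fun i => v i = v a)).card :=
        Finset.card_pos.mpr ⟨a, hFa⟩
      have h2 : 1 < (S.filter (fun i => v i = v a)).card := by
        rcases hev with ⟨k, hk⟩; omega
      obtain ⟨b, hb, hba⟩ := Finset.exists_mem_ne h2 a
      have hbS : b ∈ S := (Finset.mem_filter.mp hb).1
      have hvb : v b = v a := (Finset.mem_filter.mp hb).2
      set S' := S \ {a, b} with hS'def
      have hsub : ({a, b} : Finset (Fin 6)) ⊆ S := by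
        intro i hi
        rcases Finset.mem_insert.mp hi with rfl | hi
        · exact ha
        · rw [Finset.mem_singleton.mp hi]; exact hbS
      have hcard2 : ({a, b} : Finset (Fin 6)).card = 2 := Finset.card_pair (Ne.symm hba)
      have hS'card : S'.card = S.card - 2 := by
        rw [hS'def, Finset.card_sdiff_of_subset hsub, hcard2]
      have hSge : 2 ≤ S.card := by
        calc 2 = ({a, b} : Finset (Fin 6)).card := hcard2.symm
        _ ≤ S.card := Finset.card_le_card hsub
      have hS'le : S'.card ≤ m := by omega
      have hfib : ∀ j ∈ S', Even ((S'.filter (fun i => v i = v j)).card) := by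
        intro j hj
        have hjS : j ∈ S := (Finset.mem_sdiff.mp hj).1
        have key : S'.filter (fun i => v i = v j)
            = (S.filter (fun i => v i = v j)) \ {a, b} := by
          ext i
          simp only [hS'def, Finset.mem_filter, Finset.mem_sdiff]
          tauto
        by_cases hva : v a = v j
        · have hmem : ({a, b} : Finset (Fin 6)) ⊆ S.filter (fun i => v i = v j) := by
            intro i hi
            rcases Finset.mem_insert.mp hi with rfl | hi
            · exact Finset.mem_filter.mpr ⟨ha, hva⟩
            · rw [Finset.mem_singleton.mp hi]
              exact Finset.mem_filter.mpr ⟨hbS, hvb.trans hva⟩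
          rw [key, Finset.card_sdiff_of_subset hmem, hcard2]
          have := hv j hjS
          have hge : 2 ≤ (S.filter (fun i => v i = v j)).card :=
            le_trans hcard2.ge (Finset.card_le_card hmem)
          rcases this with ⟨k, hk⟩
          exact ⟨k - 1, by omega⟩
        · have : (S.filter (fun i => v i = v j)) \ {a, b}
              = S.filter (fun i => v i = v j) := by
            apply Finset.sdiff_eq_self_of_disjoint
            rw [Finset.disjoint_left]
            intro i hi hi2
            rcases Finset.mem_insert.mp hi2 with rfl | hi2
            · exact hva (Finset.mem_filter.mp hi).2
            · rw [Finset.mem_singleton.mp hi2] at hi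
              exact hva (hvb.symm.trans (Finset.mem_filter.mp hi).2)
          rw [key, this]
          exact hv j hjS
      obtain ⟨f', hf'out, hf'in⟩ := ih S' hS'le v hfib
      set f : Fin 6 → Fin 6 := fun i => if i = a then b else if i = b then a else f' i with hfdef
      have hfa : f a = b := by simp [hfdef]
      have hfb : f b = a := by simp [hfdef, Ne.symm hba]
      have hfo : ∀ i, i ≠ a → i ≠ b → f i = f' i := by
        intro i h1 h2; simp [hfdef, h1, h2]
      refine ⟨f, ?_, ?_⟩
      · intro i hi
        have hia : i ≠ a := fun h => hi (h ▸ ha)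
        have hib : i ≠ b := fun h => hi (h ▸ hbS)
        rw [hfo i hia hib]
        exact hf'out i (fun h => hi (Finset.mem_sdiff.mp h).1)
      · intro i hi
        by_cases hia : i = a
        · subst hia
          rw [hfa, hfb]
          exact ⟨hbS, hba, rfl, hvb⟩
        · by_cases hib : i = b
          · subst hib
            rw [hfb, hfa]
            exact ⟨ha, Ne.symm hia, rfl, hvb.symm⟩
          · have hiS' : i ∈ S' := Finset.mem_sdiff.mpr ⟨hi, by
              simp only [Finset.mem_insert, Finset.mem_singleton]; tauto⟩
            obtain ⟨h1, h2, h3, h4⟩ := hf'in i hiS'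
            have hf'a : f' i ≠ a := fun h => (Finset.mem_sdiff.mp h1).2 (by
              simp [h])
            have hf'b : f' i ≠ b := fun h => (Finset.mem_sdiff.mp h1).2 (by
              simp [h])
            rw [hfo i hia hib, hfo _ hf'a hf'b]
            exact ⟨(Finset.mem_sdiff.mp h1).1, h2, h3, h4⟩

theorem third_moment_pairing (n : ℕ) (hn : 1 ≤ n) (x y z w s t : Fin n → ZMod 2) :
    ((∀ p : Fin n, x p + y p + z p + w p + s p + t p = 0) ∧
      (∀ p q : Fin n, p < q →
        x p * x q + y p * y q + z p * z q + w p * w q + s p * s q + t p * t q = 0)) ↔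
      Paired ![x, y, z, w, s, t] := by
  set v : Fin 6 → (Fin n → ZMod 2) := ![x, y, z, w, s, t] with hv
  constructor
  · rintro ⟨h1, h2⟩
    -- sums in terms of v
    have H1 : ∀ p, ∑ i : Fin 6, v i p = 0 := by
      intro p
      rw [Fin.sum_univ_six]
      exact h1 p
    have H2 : ∀ p q, ∑ i : Fin 6, v i p * v i q = 0 := by
      intro p q
      rcases lt_trichotomy p q with h | h | h
      · rw [Fin.sum_univ_six]; exact h2 p q h
      · subst h
        calc ∑ i : Fin 6, v i p * v i p = ∑ i : Fin 6, v i p :=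
              Finset.sum_congr rfl (fun i _ => zmod2_mul_self _)
        _ = 0 := H1 p
      · calc ∑ i : Fin 6, v i p * v i q = ∑ i : Fin 6, v i q * v i p :=
              Finset.sum_congr rfl (fun i _ => mul_comm _ _)
        _ = 0 := by rw [Fin.sum_univ_six]; exact h2 q p h
    -- set of values attained an odd number of times
    set S : Finset (Fin n → ZMod 2) :=
      (Finset.univ.image v).filter
        (fun u => ¬ Even ((Finset.univ.filter (fun i => v i = u)).card)) with hS
    have sumrw : ∀ f : (Fin n → ZMod 2) → ZMod 2,
        ∑ i : Fin 6, f (v i) = ∑ u ∈ S, f u := by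
      intro f
      rw [Finset.sum_comp f v, hS, Finset.sum_filter]
      apply Finset.sum_congr rfl
      intro u _
      rw [nsmul_eq_mul, castval]
      by_cases h : Even ((Finset.univ.filter (fun i => v i = u)).card) <;> simp [h]
    have hA : ∀ p, ∑ u ∈ S, u p = 0 :=
      fun p => (sumrw (fun u => u p)).symm.trans (H1 p)
    have hB : ∀ p q, ∑ u ∈ S, u p * u q = 0 :=
      fun p q => (sumrw (fun u => u p * u q)).symm.trans (H2 p q)
    have hcard6 : ∑ u ∈ Finset.univ.image v,
        (Finset.univ.filter (fun i => v i = u)).card = 6 := by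
      rw [← Finset.card_eq_sum_card_image v Finset.univ]
      simp
    have hSeven : Even S.card := by
      apply even_of_natCast_zmod2
      have e1 : ((S.card : ℕ) : ZMod 2) = ∑ u ∈ S, (1 : ZMod 2) := by
        rw [Finset.sum_const, nsmul_eq_mul, mul_one]
      rw [e1, hS, Finset.sum_filter]
      have e2 : ∑ u ∈ Finset.univ.image v,
          (if ¬ Even ((Finset.univ.filter (fun i => v i = u)).card) then (1 : ZMod 2) else 0)
          = ∑ u ∈ Finset.univ.image v,
            (((Finset.univ.filter (fun i => v i = u)).card : ZMod 2)) := by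
        apply Finset.sum_congr rfl
        intro u _
        rw [castval]
        by_cases h : Even ((Finset.univ.filter (fun i => v i = u)).card) <;> simp [h]
      rw [e2, ← Nat.cast_sum, hcard6]
      decide
    have hSle6 : S.card ≤ 6 := by
      calc S.card ≤ (Finset.univ.image v).card := Finset.card_filter_le _ _
      _ ≤ (Finset.univ : Finset (Fin 6)).card := Finset.card_image_le
      _ = 6 := by simp
    have hSempty : S = ∅ := by
      by_contra hne
      obtain ⟨u0, hu0⟩ := Finset.nonempty_iff_ne_empty.mpr hne
      have hinj : Function.Injective (fun u : Fin n → ZMod 2 => u + u0) :=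
        add_left_injective u0
      set S₁ : Finset (Fin n → ZMod 2) := S.image (fun u => u + u0) with hS1
      have hS1card : S₁.card = S.card := Finset.card_image_of_injective _ hinj
      have hA1 : ∀ p, ∑ u ∈ S₁, u p = 0 := by
        intro p
        rw [hS1, Finset.sum_image (fun a _ b _ h => hinj h)]
        have e : ∑ u ∈ S, ((u + u0) p) = ∑ u ∈ S, (u p + u0 p) := rfl
        rw [e, Finset.sum_add_distrib, hA p, Finset.sum_const, nsmul_eq_mul,
          natCast_zmod2_even hSeven, zero_add, zero_mul]
      have hB1 : ∀ p q, ∑ u ∈ S₁, u p * u q = 0 := by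
        intro p q
        rw [hS1, Finset.sum_image (fun a _ b _ h => hinj h)]
        have expand : ∀ u : Fin n → ZMod 2, (u + u0) p * (u + u0) q
            = u p * u q + (u p * u0 q + (u0 p * u q + u0 p * u0 q)) := by
          intro u
          show (u p + u0 p) * (u q + u0 q) = _
          ring
        rw [Finset.sum_congr rfl (fun u _ => expand u), Finset.sum_add_distrib,
          Finset.sum_add_distrib, Finset.sum_add_distrib, hB p q,
          ← Finset.sum_mul, hA p, ← Finset.mul_sum, hA q, Finset.sum_const,
          nsmul_eq_mul, natCast_zmod2_even hSeven]
        ring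
      have h0 : (0 : Fin n → ZMod 2) ∈ S₁ := by
        rw [hS1]
        exact Finset.mem_image.mpr ⟨u0, hu0, by funext p; exact zmod2_add_self (u0 p)⟩
      have hScard2 : 2 ≤ S.card := by
        have := Finset.card_pos.mpr ⟨u0, hu0⟩
        have := Nat.even_iff.mp hSeven
        omega
      set N : Finset (Fin n → ZMod 2) := S₁.erase 0 with hN
      have hNcard : N.card = S₁.card - 1 := Finset.card_erase_of_mem h0
      have hAN : ∀ p, ∑ u ∈ N, u p = 0 := by
        intro p
        rw [hN]
        exact (Finset.sum_erase (f := fun u => u p) S₁ (by simp)).trans (hA1 p)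
      have hBN : ∀ p q, ∑ u ∈ N, u p * u q = 0 := by
        intro p q
        rw [hN]
        exact (Finset.sum_erase (f := fun u => u p * u q) S₁ (by simp)).trans (hB1 p q)
      have hNne : N.Nonempty := by
        apply Finset.card_pos.mp
        omega
      obtain ⟨u1, hu1N⟩ := hNne
      have hu1ne0 : u1 ≠ 0 := (Finset.mem_erase.mp hu1N).1
      have hex : ∃ p0, u1 p0 ≠ 0 := by
        by_contra hc
        push_neg at hc
        exact hu1ne0 (funext hc)
      obtain ⟨p0, hp0⟩ := hex
      have hp01 : u1 p0 = 1 := zmod2_ne_zero' _ hp0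
      set T : Finset (Fin n → ZMod 2) := N.filter (fun u => u p0 = 1) with hT
      have hTsum : ∀ q, ∑ u ∈ T, u q = 0 := by
        intro q
        have e : ∑ u ∈ T, u q = ∑ u ∈ N, u p0 * u q := by
          rw [hT, Finset.sum_filter]
          apply Finset.sum_congr rfl
          intro u _
          by_cases h : u p0 = 1
          · rw [if_pos h, h, one_mul]
          · rw [if_neg h, zmod2_ne_one' _ h, zero_mul]
        rw [e]
        exact hBN p0 q
      have hTeven : Even T.card := by
        apply even_of_natCast_zmod2
        have e : ∑ u ∈ T, u p0 = ((T.card : ℕ) : ZMod 2) := by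
          rw [Finset.sum_congr rfl (fun u hu => (Finset.mem_filter.mp hu).2),
            Finset.sum_const, nsmul_eq_mul, mul_one]
        rw [← e]
        exact hTsum p0
      have hu1T : u1 ∈ T := by
        rw [hT]; exact Finset.mem_filter.mpr ⟨hu1N, hp01⟩
      have hTle : T.card ≤ N.card := Finset.card_filter_le _ _
      have hNle5 : N.card ≤ 5 := by omega
      have hTpos : 0 < T.card := Finset.card_pos.mpr ⟨u1, hu1T⟩
      have h24 : T.card = 2 ∨ T.card = 4 := by
        have := Nat.even_iff.mp hTeven
        omega
      rcases h24 with h2 | h4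
      · obtain ⟨a, b, hab, hTab⟩ := Finset.card_eq_two.mp h2
        apply hab
        funext q
        apply zmod2_add_eq_zero'
        have hs := hTsum q
        rw [hTab, Finset.sum_insert (by simp [hab]), Finset.sum_singleton] at hs
        exact hs
      · have hN5 : N.card = 5 := by
          have := Nat.even_iff.mp hSeven
          omega
        have hsub : T ⊆ N := Finset.filter_subset _ _
        have hd1 : (N \ T).card = 1 := by
          rw [Finset.card_sdiff_of_subset hsub]
          omega
        obtain ⟨k, hk⟩ := Finset.card_eq_one.mp hd1
        have hkmem : k ∈ N \ T := by
          rw [hk]; exact Finset.mem_singleton_self k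
        have hk0 : k = 0 := by
          funext q
          have hs : ∑ u ∈ N \ T, u q + ∑ u ∈ T, u q = ∑ u ∈ N, u q :=
            Finset.sum_sdiff hsub
          rw [hk, Finset.sum_singleton, hTsum q, hAN q] at hs
          simpa using hs
        have hkN : k ∈ N := (Finset.mem_sdiff.mp hkmem).1
        exact (Finset.mem_erase.mp hkN).1 hk0
    obtain ⟨f, hfout, hfin⟩ := exists_matching 6 Finset.univ (by simp) v
      (fun j _ => by
        by_contra hodd
        have hmem : v j ∈ S := by
          rw [hS]
          exact Finset.mem_filter.mpr
            ⟨Finset.mem_image_of_mem v (Finset.mem_univ j), hodd⟩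
        rw [hSempty] at hmem
        exact absurd hmem (Finset.notMem_empty _))
    have hinvol : Function.Involutive f := fun i => (hfin i (Finset.mem_univ i)).2.2.1
    refine ⟨Function.Involutive.toPerm f hinvol, ?_, ?_, ?_⟩
    · intro k
      simpa using (hfin k (Finset.mem_univ k)).2.1
    · intro k
      simpa using hinvol k
    · intro k
      simpa using (hfin k (Finset.mem_univ k)).2.2.2
  · rintro ⟨σ, hne, hinv, heq⟩
    constructor
    · intro p
      have : ∑ i : Fin 6, v i p = 0 := by
        apply Finset.sum_involution (fun i _ => σ i)
        · intro i _
          rw [show v (σ i) p = v i p from congrFun (heq i) p]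
          exact zmod2_add_self _
        · intro i _ _; exact hne i
        · intro i _; exact Finset.mem_univ _
        · intro i _; exact hinv i
      rwa [Fin.sum_univ_six] at this
    · intro p q _
      have : ∑ i : Fin 6, v i p * v i q = 0 := by
        apply Finset.sum_involution (fun i _ => σ i)
        · intro i _
          rw [show v (σ i) = v i from heq i]
          exact zmod2_add_self _
        · intro i _ _; exact hne i
        · intro i _; exact Finset.mem_univ _
        · intro i _; exact hinv i
      rwa [Fin.sum_univ_six] at this
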